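/- Non-bisimilarity of the weakened engine (Proposition 4): Eng ≉ Enĝ, i.e., the engine Eng is NOT weakly bisimilar to the variant engine Enĝ obtained from Eng by changing the evolution map so that heat(ξu,cool) = −0.7 (instead of −1) when ξu(cool) = on. -/
import Mathlib


namespace CCPS

/-! ## Names and values -/

abbrev Chan := ℕ
abbrev SensName := ℕ
abbrev ActName := ℕ
abbrev Val := ℝ

/-! ## Processes (value binders as functions, process variables in de Bruijn style) -/

inductive Proc : Type where
  | nil   : Proc
  | pvar  : ℕ → Proc
  | tick  : Proc → Proc
  | par   : Proc → Proc → Proc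
  | out   : Chan → Val → Proc → Proc → Proc      -- ⌊c̄⟨v⟩.P⌋Q
  | inp   : Chan → (Val → Proc) → Proc → Proc    -- ⌊c(x).P⌋Q
  | read  : SensName → (Val → Proc) → Proc → Proc -- ⌊s?(x).P⌋Q
  | write : ActName → Val → Proc → Proc → Proc   -- ⌊a!⟨v⟩.P⌋Q
  | res   : Proc → Chan → Proc                   -- P∖c
  | fix   : Proc → Proc                          -- fix X.P  (binds de Bruijn index 0)

/-- Lift (shift) all process variables ≥ cutoff `c` by one. -/
def Proc.lift (c : ℕ) : Proc → Proc
  | .nil => .nil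
  | .pvar m => if m < c then .pvar m else .pvar (m+1)
  | .tick P => .tick (Proc.lift c P)
  | .par P Q => .par (Proc.lift c P) (Proc.lift c Q)
  | .out ch v P Q => .out ch v (Proc.lift c P) (Proc.lift c Q)
  | .inp ch f Q => .inp ch (fun v => Proc.lift c (f v)) (Proc.lift c Q)
  | .read s f Q => .read s (fun v => Proc.lift c (f v)) (Proc.lift c Q)
  | .write a v P Q => .write a v (Proc.lift c P) (Proc.lift c Q)
  | .res P ch => .res (Proc.lift c P) ch
  | .fix P => .fix (Proc.lift (c+1) P)

/-- Substitute process variable `n` by `R`. -/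
def Proc.subst : Proc → ℕ → Proc → Proc
  | .nil, _, _ => .nil
  | .pvar m, n, R => if m = n then R else if n < m then .pvar (m-1) else .pvar m
  | .tick P, n, R => .tick (Proc.subst P n R)
  | .par P Q, n, R => .par (Proc.subst P n R) (Proc.subst Q n R)
  | .out ch v P Q, n, R => .out ch v (Proc.subst P n R) (Proc.subst Q n R)
  | .inp ch f Q, n, R => .inp ch (fun v => Proc.subst (f v) n R) (Proc.subst Q n R)
  | .read s f Q, n, R => .read s (fun v => Proc.subst (f v) n R) (Proc.subst Q n R)
  | .write a v P Q, n, R => .write a v (Proc.subst P n R) (Proc.subst Q n R)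
  | .res P ch, n, R => .res (Proc.subst P n R) ch
  | .fix P, n, R => .fix (Proc.subst P (n+1) (Proc.lift 0 R))

/-- Unfolding of recursion: P[fix X.P / X]. -/
def Proc.unfold (P : Proc) : Proc := Proc.subst P 0 (.fix P)

/-! ## Labels -/

inductive Label : Type where
  | tick  : Label
  | tau   : Label
  | out   : Chan → Val → Label     -- c̄v
  | inp   : Chan → Val → Label     -- cv
  | write : ActName → Val → Label  -- a!v
  | read  : SensName → Val → Label -- s?v

/-! ## Labelled transition system for processes.

Untimed transitions `UStep` (labels different from tick) are defined first;
then timed transitions `TStep` (which use the absence of τ-transitions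
negatively) are defined on top of them, and `Step` combines the two. -/

inductive UStep : Proc → Label → Proc → Prop where
  | outp  : UStep (.out c v P Q) (.out c v) P
  | inpp  : UStep (.inp c f Q) (.inp c v) (f v)
  | write : UStep (.write a v P Q) (.write a v) P
  | read  : UStep (.read s f Q) (.read s v) (f v)
  | comL  : UStep P (.out c v) P' → UStep Q (.inp c v) Q' →
            UStep (.par P Q) .tau (.par P' Q')
  | comR  : UStep P (.inp c v) P' → UStep Q (.out c v) Q' →
            UStep (.par P Q) .tau (.par P' Q')
  | parL  : UStep P l P' → l ≠ .tick → UStep (.par P Q) l (.par P' Q)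
  | parR  : UStep Q l Q' → l ≠ .tick → UStep (.par P Q) l (.par P Q')
  | res   : UStep P l P' → (∀ v, l ≠ .inp c v ∧ l ≠ .out c v) →
            UStep (.res P c) l (.res P' c)
  | unfold : UStep (Proc.unfold P) l Q → UStep (.fix P) l Q

inductive TStep : Proc → Proc → Prop where
  | nil          : TStep .nil .nil
  | delay        : TStep (.tick P) P
  | timeoutOut   : TStep (.out c v P Q) Q
  | timeoutInp   : TStep (.inp c f Q) Q
  | timeoutRead  : TStep (.read s f Q) Q
  | timeoutWrite : TStep (.write a v P Q) Q
  | timePar      : TStep P P' → TStep Q Q' → (∀ R, ¬ UStep (.par P Q) .tau R) →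
                   TStep (.par P Q) (.par P' Q')
  | res          : TStep P P' → TStep (.res P c) (.res P' c)
  | unfold       : TStep (Proc.unfold P) Q → TStep (.fix P) Q

/-- The process LTS. -/
def Step (P : Proc) (l : Label) (Q : Proc) : Prop :=
  match l with
  | .tick => TStep P Q
  | _ => UStep P l Q

/-! ## Structural congruence: the least congruence containing commutativity and
associativity of parallel composition, with nil as neutral element. -/

inductive SC : Proc → Proc → Prop where
  | refl      : SC P P
  | symm      : SC P Q → SC Q P
  | trans     : SC P Q → SC Q R → SC P R
  | parComm   : SC (.par P Q) (.par Q P)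
  | parAssoc  : SC (.par (.par P Q) R) (.par P (.par Q R))
  | parNil    : SC (.par P .nil) P
  | tickCong  : SC P P' → SC (.tick P) (.tick P')
  | parCong   : SC P P' → SC Q Q' → SC (.par P Q) (.par P' Q')
  | outCong   : SC P P' → SC Q Q' → SC (.out c v P Q) (.out c v P' Q')
  | inpCong   : (∀ v, SC (f v) (g v)) → SC Q Q' → SC (.inp c f Q) (.inp c g Q')
  | readCong  : (∀ v, SC (f v) (g v)) → SC Q Q' → SC (.read s f Q) (.read s g Q')
  | writeCong : SC P P' → SC Q Q' → SC (.write a v P Q) (.write a v P' Q')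
  | resCong   : SC P P' → SC (.res P c) (.res P' c)
  | fixCong   : SC P P' → SC (.fix P) (.fix P')

/-! ## Static predicates on processes -/

/-- All free process variables are < d. -/
inductive ClosedAbove : ℕ → Proc → Prop where
  | nil   : ClosedAbove d .nil
  | pvar  : m < d → ClosedAbove d (.pvar m)
  | tick  : ClosedAbove d P → ClosedAbove d (.tick P)
  | par   : ClosedAbove d P → ClosedAbove d Q → ClosedAbove d (.par P Q)
  | out   : ClosedAbove d P → ClosedAbove d Q → ClosedAbove d (.out c v P Q)
  | inp   : (∀ v, ClosedAbove d (f v)) → ClosedAbove d Q → ClosedAbove d (.inp c f Q)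
  | read  : (∀ v, ClosedAbove d (f v)) → ClosedAbove d Q → ClosedAbove d (.read s f Q)
  | write : ClosedAbove d P → ClosedAbove d Q → ClosedAbove d (.write a v P Q)
  | res   : ClosedAbove d P → ClosedAbove d (.res P c)
  | fix   : ClosedAbove (d+1) P → ClosedAbove d (.fix P)

/-- A closed process: no free process variables. -/
def Proc.Closed (P : Proc) : Prop := ClosedAbove 0 P

/-- `TG n P`: process variable `n` occurs only time-guarded in `P`
(occurrences under `tick.-` or in the timeout continuation `Q` of `⌊π.P⌋Q`
are time-guarded). -/
inductive TG : ℕ → Proc → Prop where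
  | nil   : TG n .nil
  | pvar  : m ≠ n → TG n (.pvar m)
  | tick  : TG n (.tick P)
  | par   : TG n P → TG n Q → TG n (.par P Q)
  | out   : TG n P → TG n (.out c v P Q)
  | inp   : (∀ v, TG n (f v)) → TG n (.inp c f Q)
  | read  : (∀ v, TG n (f v)) → TG n (.read s f Q)
  | write : TG n P → TG n (.write a v P Q)
  | res   : TG n P → TG n (.res P c)
  | fix   : TG (n+1) P → TG n (.fix P)

/-- Well-formed processes: in every recursion `fix X.P` all occurrences of `X`
in `P` are time-guarded. -/
inductive WF : Proc → Prop where
  | nil   : WF .nil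
  | pvar  : WF (.pvar m)
  | tick  : WF P → WF (.tick P)
  | par   : WF P → WF Q → WF (.par P Q)
  | out   : WF P → WF Q → WF (.out c v P Q)
  | inp   : (∀ v, WF (f v)) → WF Q → WF (.inp c f Q)
  | read  : (∀ v, WF (f v)) → WF Q → WF (.read s f Q)
  | write : WF P → WF Q → WF (.write a v P Q)
  | res   : WF P → WF (.res P c)
  | fix   : TG 0 P → WF P → WF (.fix P)

/-- Non-interfering process: it never reads sensors nor writes actuators. -/
inductive NonInterfering : Proc → Prop where
  | nil  : NonInterfering .nil
  | pvar : NonInterfering (.pvar m)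
  | tick : NonInterfering P → NonInterfering (.tick P)
  | par  : NonInterfering P → NonInterfering Q → NonInterfering (.par P Q)
  | out  : NonInterfering P → NonInterfering Q → NonInterfering (.out c v P Q)
  | inp  : (∀ v, NonInterfering (f v)) → NonInterfering Q → NonInterfering (.inp c f Q)
  | res  : NonInterfering P → NonInterfering (.res P c)
  | fix  : NonInterfering P → NonInterfering (.fix P)

/-- `DevOK A S P`: every actuator mentioned in `P` is in `A` and every sensor
mentioned in `P` is in `S`. -/
inductive DevOK (A S : Finset ℕ) : Proc → Prop where
  | nil   : DevOK A S .nil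
  | pvar  : DevOK A S (.pvar m)
  | tick  : DevOK A S P → DevOK A S (.tick P)
  | par   : DevOK A S P → DevOK A S Q → DevOK A S (.par P Q)
  | out   : DevOK A S P → DevOK A S Q → DevOK A S (.out c v P Q)
  | inp   : (∀ v, DevOK A S (f v)) → DevOK A S Q → DevOK A S (.inp c f Q)
  | read  : s ∈ S → (∀ v, DevOK A S (f v)) → DevOK A S Q → DevOK A S (.read s f Q)
  | write : a ∈ A → DevOK A S P → DevOK A S Q → DevOK A S (.write a v P Q)
  | res   : DevOK A S P → DevOK A S (.res P c)
  | fix   : DevOK A S P → DevOK A S (.fix P)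

/-! ## Physical environments -/

structure Env where
  X : Finset ℕ                       -- state variables
  A : Finset ℕ                       -- actuators
  S : Finset ℕ                       -- sensors
  xi_x : {n // n ∈ X} → ℝ            -- state function
  xi_u : {n // n ∈ A} → ℝ            -- actuator function
  xi_w : {n // n ∈ X} → ℝ            -- uncertainty function
  evol : ({n // n ∈ X} → ℝ) → ({n // n ∈ A} → ℝ) → ({n // n ∈ X} → ℝ) →
         Set ({n // n ∈ X} → ℝ)      -- evolution map
  xi_e : {n // n ∈ S} → ℝ            -- sensor-error function
  meas : ({n // n ∈ X} → ℝ) → ({n // n ∈ S} → ℝ) →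
         Set ({n // n ∈ S} → ℝ)      -- measurement map
  inv  : ({n // n ∈ X} → ℝ) → Prop   -- invariant function

/-- Possible measurements of sensor `s` in `E`. -/
def readSensor (E : Env) (s : ℕ) : Set ℝ :=
  { r | ∃ h : s ∈ E.S, ∃ ξ ∈ E.meas E.xi_x E.xi_e, r = ξ ⟨s, h⟩ }

/-- Update the value of actuator `a` to `v`. -/
def updateAct (E : Env) (a : ℕ) (v : ℝ) : Env :=
  { E with xi_u := fun b => if (b : ℕ) = a then v else E.xi_u b }

/-- The set of next admissible environments. -/
def nextEnv (E : Env) : Set Env :=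
  { E' | ∃ ξ ∈ E.evol E.xi_x E.xi_u E.xi_w, E' = { E with xi_x := ξ } }

/-- The invariant of `E`, evaluated at the current state. -/
def invHolds (E : Env) : Prop := E.inv E.xi_x

/-! ## Disjoint union of environments -/

/-- Glue two functions defined on finite sets into one on the union
(well defined on disjoint sets). -/
def glue {X1 X2 : Finset ℕ} (f : {n // n ∈ X1} → ℝ) (g : {n // n ∈ X2} → ℝ) :
    {n // n ∈ X1 ∪ X2} → ℝ :=
  fun x => if h : (x : ℕ) ∈ X1 then f ⟨x, h⟩
           else g ⟨x, (Finset.mem_union.mp x.2).resolve_left h⟩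

/-- Restriction of a function on a union to the left component. -/
def restrL {X1 X2 : Finset ℕ} (f : {n // n ∈ X1 ∪ X2} → ℝ) : {n // n ∈ X1} → ℝ :=
  fun x => f ⟨x, Finset.mem_union_left _ x.2⟩

/-- Restriction of a function on a union to the right component. -/
def restrR {X1 X2 : Finset ℕ} (f : {n // n ∈ X1 ∪ X2} → ℝ) : {n // n ∈ X2} → ℝ :=
  fun x => f ⟨x, Finset.mem_union_right _ x.2⟩

/-- Disjointness of the name sets of two environments. -/
def EnvDisj (E1 E2 : Env) : Prop :=
  Disjoint E1.X E2.X ∧ Disjoint E1.A E2.A ∧ Disjoint E1.S E2.S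

/-- Disjoint union `E1 ⊎ E2` of two environments. -/
def Env.disjUnion (E1 E2 : Env) : Env where
  X := E1.X ∪ E2.X
  A := E1.A ∪ E2.A
  S := E1.S ∪ E2.S
  xi_x := glue E1.xi_x E2.xi_x
  xi_u := glue E1.xi_u E2.xi_u
  xi_w := glue E1.xi_w E2.xi_w
  evol := fun ξ ψ φ =>
    { ξ' | ∃ ξ1 ∈ E1.evol (restrL ξ) (restrL ψ) (restrL φ),
           ∃ ξ2 ∈ E2.evol (restrR ξ) (restrR ψ) (restrR φ), ξ' = glue ξ1 ξ2 }
  xi_e := glue E1.xi_e E2.xi_e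
  meas := fun ξ η =>
    { m | ∃ m1 ∈ E1.meas (restrL ξ) (restrL η),
          ∃ m2 ∈ E2.meas (restrR ξ) (restrR η), m = glue m1 m2 }
  inv := fun ξ => E1.inv (restrL ξ) ∧ E2.inv (restrR ξ)

/-! ## Cyber-physical systems -/

structure CPS where
  env  : Env
  proc : Proc

/-- Well-formed CPS: closed, time-guarded process mentioning only devices of
its environment. -/
def CPS.WellFormed (M : CPS) : Prop :=
  M.proc.Closed ∧ WF M.proc ∧ DevOK M.env.A M.env.S M.proc

/-- Disjoint union of (non-interfering) CPSs. -/
def CPS.disjUnion (M O : CPS) : CPS :=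
  ⟨M.env.disjUnion O.env, .par M.proc O.proc⟩

/-- Untimed CPS transitions (rules Out, Inp, SensRead, ActWrite, Tau). -/
inductive CStepU : CPS → Label → CPS → Prop where
  | out : UStep P (.out c v) P' → invHolds E →
          CStepU ⟨E, P⟩ (.out c v) ⟨E, P'⟩
  | inp : UStep P (.inp c v) P' → invHolds E →
          CStepU ⟨E, P⟩ (.inp c v) ⟨E, P'⟩
  | sensRead : UStep P (.read s v) P' → invHolds E → v ∈ readSensor E s →
          CStepU ⟨E, P⟩ .tau ⟨E, P'⟩
  | actWrite : UStep P (.write a v) P' → invHolds E →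
          CStepU ⟨E, P⟩ .tau ⟨updateAct E a v, P'⟩
  | tau : UStep P .tau P' → invHolds E →
          CStepU ⟨E, P⟩ .tau ⟨E, P'⟩

/-- The CPS LTS (rule Time for tick, `CStepU` otherwise). -/
def CStep (M : CPS) (α : Label) (N : CPS) : Prop :=
  match α with
  | .tick => TStep M.proc N.proc ∧ (∀ N', ¬ CStepU M .tau N') ∧
             invHolds M.env ∧ N.env ∈ nextEnv M.env
  | _ => CStepU M α N

/-! ## Weak transitions and bisimulation -/

def TauStep (M N : CPS) : Prop := CStep M .tau N

/-- `M ⇒ N`. -/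
def WeakTau : CPS → CPS → Prop := Relation.ReflTransGen TauStep

/-- `M ⇒α⇒ N`. -/
def WeakStep (M : CPS) (α : Label) (N : CPS) : Prop :=
  ∃ M₁ M₂, WeakTau M M₁ ∧ CStep M₁ α M₂ ∧ WeakTau M₂ N

/-- `M ⇒α̂⇒ N`. -/
def WeakHat (M : CPS) (α : Label) (N : CPS) : Prop :=
  match α with
  | .tau => WeakTau M N
  | _ => WeakStep M α N

def IsBisimulation (R : CPS → CPS → Prop) : Prop :=
  (∀ {M N}, R M N → R N M) ∧
  (∀ {M N α M'}, R M N → CStep M α M' → ∃ N', WeakHat N α N' ∧ R M' N')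

/-- Weak bisimilarity `M ≈ N`. -/
def Bisim (M N : CPS) : Prop := ∃ R, IsBisimulation R ∧ R M N

/-! ## Traces -/

/-- Reachability in the CPS LTS. -/
def Reach : CPS → CPS → Prop :=
  Relation.ReflTransGen (fun M N => ∃ α, CStep M α N)

def UntimedStep (M N : CPS) : Prop := ∃ α, α ≠ Label.tick ∧ CStep M α N

def UntimedReach : CPS → CPS → Prop := Relation.ReflTransGen UntimedStep

/-- One time slot: some untimed activity followed by a tick. -/
def SlotStep (M N : CPS) : Prop := ∃ M', UntimedReach M M' ∧ CStep M' .tick N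

/-! ## Derived process notation -/

/-- Persistent prefix `π.P := fix X.⌊π.P⌋X` (output). -/
def prefOut (c : Chan) (v : Val) (P : Proc) : Proc :=
  .fix (.out c v (Proc.lift 0 P) (.pvar 0))

/-- Persistent prefix (actuator write). -/
def prefWrite (a : ActName) (v : Val) (P : Proc) : Proc :=
  .fix (.write a v (Proc.lift 0 P) (.pvar 0))

/-- Persistent prefix (sensor read). -/
def prefRead (s : SensName) (f : Val → Proc) : Proc :=
  .fix (.read s (fun v => Proc.lift 0 (f v)) (.pvar 0))

/-- `tick^k.P`. -/
def Proc.ticks : ℕ → Proc → Proc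
  | 0, P => P
  | n+1, P => .tick (Proc.ticks n P)

/-! ## The engine case study -/

noncomputable section
open Classical

def engDelta : ℝ := 0.4   -- uncertainty δ
def engEps : ℝ := 0.1     -- sensor error ε

/-- Value written on the actuator `cool` to turn the cooling on
(the actuator is on iff its value is negative). -/
def valOn : Val := -1
/-- Value written on the actuator `cool` to turn the cooling off. -/
def valOff : Val := 1

def IsOn (u : ℝ) : Prop := u < 0
def IsOff (u : ℝ) : Prop := 0 ≤ u

/-- `heat(ξu, cool)`: `-coolRate` if the cooling is active, `+1` otherwise. -/
def engHeat (coolRate : ℝ) (u : ℝ) : ℝ := if u < 0 then -coolRate else 1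

def warningCh : Chan := 0
def alarmCh : Chan := 1
def failureCh : Chan := 2

/-- The physical environment of the engine, with cooling power `coolRate`,
state variable `x` (temperature), actuator `a` (cool) and sensor `s`. -/
def EngEnvN (coolRate : ℝ) (x a s : ℕ) : Env where
  X := {x}
  A := {a}
  S := {s}
  xi_x := fun _ => 0
  xi_u := fun _ => valOff
  xi_w := fun _ => engDelta
  evol := fun ξ ψ _ =>
    { ξ' | ∃ γ ∈ Set.Icc (-engDelta) engDelta,
           ∀ y u, ξ' y = ξ y + engHeat coolRate (ψ u) + γ }
  xi_e := fun _ => engEps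
  meas := fun ξ _ =>
    { m | ∀ t y, m t ∈ Set.Icc (ξ y - engEps) (ξ y + engEps) }
  inv := fun ξ => ∀ y, 0 ≤ ξ y ∧ ξ y ≤ 30

/-- The controller of the engine with identifier `ID`, actuator `a` and
sensor `s`:
`Ctrl = fix X. s?(x). if x > 10 then Cooling else tick.X` with
`Cooling = a!⟨on⟩.fix Y.tick⁵.s?(x). if x > 10 then w̄arning⟨ID⟩.Y else a!⟨off⟩.tick.X`. -/
def CtrlN (ID : Val) (a s : ℕ) : Proc :=
  .fix (prefRead s (fun x =>
    if 10 < x then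
      prefWrite a valOn (.fix (Proc.ticks 5 (prefRead s (fun y =>
        if 10 < y then prefOut warningCh ID (.pvar 0)
        else prefWrite a valOff (.tick (.pvar 1))))))
    else .tick (.pvar 0)))

/-- The engine with cooling power `coolRate`. -/
def EngGen (coolRate : ℝ) : CPS := ⟨EngEnvN coolRate 0 0 0, CtrlN 0 0 0⟩

/-- The engine `Eng`. -/
def Eng : CPS := EngGen 1
/-- The variant engine `Enḡ` (heat = −0.8 when cooling). -/
def EngBar : CPS := EngGen 0.8
/-- The variant engine `Enĝ` (heat = −0.7 when cooling). -/
def EngHat : CPS := EngGen 0.7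

/-- Current temperature of an engine-like CPS (state variable named 0). -/
def CPS.temp (M : CPS) : ℝ :=
  if h : (0 : ℕ) ∈ M.env.X then M.env.xi_x ⟨0, h⟩ else 0

/-- Current value of the `cool` actuator of an engine-like CPS
(actuator named 0). -/
def CPS.cool (M : CPS) : ℝ :=
  if h : (0 : ℕ) ∈ M.env.A then M.env.xi_u ⟨0, h⟩ else 0

/-! ## The airplane case study -/

def idL : Val := 0
def idR : Val := 1

/-- `CheckAux id m` is `Check^id_(5-m)`; the free process variable 0 is the
recursion variable `X` of `Check`. -/
def CheckAux (id : Val) : ℕ → Proc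
  | 0 => .inp warningCh (fun z =>
           if z ≠ id then prefOut alarmCh 0 (.tick (.pvar 0))
           else prefOut failureCh id (.tick (.pvar 0)))
         (prefOut failureCh id (.pvar 0))
  | m+1 => .inp warningCh (fun y =>
           if y ≠ id then prefOut alarmCh 0 (.tick (.pvar 0))
           else .tick (CheckAux id m))
         (CheckAux id m)

/-- The monitoring process `Check`. -/
def Check : Proc :=
  .fix (.inp warningCh
    (fun x => if x = idL then CheckAux idL 4 else CheckAux idR 4)
    (.pvar 0))

/-- The left engine (identifier L, devices named 0). -/
def EngL (coolRate : ℝ) : CPS := ⟨EngEnvN coolRate 0 0 0, CtrlN idL 0 0⟩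
/-- The right engine (identifier R, devices named 1). -/
def EngR (coolRate : ℝ) : CPS := ⟨EngEnvN coolRate 1 1 1, CtrlN idR 1 1⟩

/-- `Airplane(r) = ((Eng_L ⊎ Eng_R) ‖ Check)∖warning` with cooling power r. -/
def AirplaneGen (coolRate : ℝ) : CPS :=
  ⟨(EngEnvN coolRate 0 0 0).disjUnion (EngEnvN coolRate 1 1 1),
   .res (.par (.par (CtrlN idL 0 0) (CtrlN idR 1 1)) Check) warningCh⟩

def Airplane : CPS := AirplaneGen 1
def AirplaneBar : CPS := AirplaneGen 0.8

end

section Aux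

theorem Proc.lift_lift (P : Proc) : ∀ c c', c' ≤ c →
    Proc.lift c' (Proc.lift c P) = Proc.lift (c+1) (Proc.lift c' P) := by
  induction P with
  | nil => intros; rfl
  | pvar m =>
    intro c c' h
    by_cases h1 : m < c'
    · have h2 : m < c := by omega
      simp only [Proc.lift, if_pos h1, if_pos h2, if_pos (by omega : m < c + 1)]
    · by_cases h2 : m < c
      · simp only [Proc.lift, if_pos h2, if_neg h1, if_pos (by omega : m + 1 < c + 1),
          if_neg h1]
      · simp only [Proc.lift, if_neg h2, if_neg h1, if_neg (by omega : ¬ m + 1 < c'),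
          if_neg (by omega : ¬ m + 1 < c + 1)]
  | tick P ih => intro c c' h; simp only [Proc.lift, ih c c' h]
  | par P Q ihP ihQ => intro c c' h; simp only [Proc.lift, ihP c c' h, ihQ c c' h]
  | out ch v P Q ihP ihQ => intro c c' h; simp only [Proc.lift, ihP c c' h, ihQ c c' h]
  | inp ch f Q ihf ihQ =>
    intro c c' h
    simp only [Proc.lift, ihQ c c' h]
    congr 1
    funext v; exact ihf v c c' h
  | read s f Q ihf ihQ =>
    intro c c' h
    simp only [Proc.lift, ihQ c c' h]
    congr 1
    funext v; exact ihf v c c' h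
  | write a v P Q ihP ihQ => intro c c' h; simp only [Proc.lift, ihP c c' h, ihQ c c' h]
  | res P ch ih => intro c c' h; simp only [Proc.lift, ih c c' h]
  | fix P ih => intro c c' h; simp only [Proc.lift, ih (c+1) (c'+1) (by omega)]

theorem Proc.subst_lift (P : Proc) : ∀ n R, Proc.subst (Proc.lift n P) n R = P := by
  induction P with
  | nil => intros; rfl
  | pvar m =>
    intro n R
    by_cases h : m < n
    · simp only [Proc.lift, if_pos h, Proc.subst, if_neg (by omega : ¬ m = n),
        if_neg (by omega : ¬ n < m)]
    · simp only [Proc.lift, if_neg h, Proc.subst, if_neg (by omega : ¬ m + 1 = n),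
        if_pos (by omega : n < m + 1), Nat.add_sub_cancel]
  | tick P ih => intro n R; simp only [Proc.lift, Proc.subst, ih]
  | par P Q ihP ihQ => intro n R; simp only [Proc.lift, Proc.subst, ihP, ihQ]
  | out ch v P Q ihP ihQ => intro n R; simp only [Proc.lift, Proc.subst, ihP, ihQ]
  | inp ch f Q ihf ihQ =>
    intro n R; simp only [Proc.lift, Proc.subst, ihQ]
    congr 1; funext v; exact ihf v n R
  | read s f Q ihf ihQ =>
    intro n R; simp only [Proc.lift, Proc.subst, ihQ]
    congr 1; funext v; exact ihf v n R
  | write a v P Q ihP ihQ => intro n R; simp only [Proc.lift, Proc.subst, ihP, ihQ]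
  | res P ch ih => intro n R; simp only [Proc.lift, Proc.subst, ih]
  | fix P ih => intro n R; simp only [Proc.lift, Proc.subst, ih]

theorem Proc.subst_lift_comm (P : Proc) : ∀ c n R, c ≤ n →
    Proc.subst (Proc.lift c P) (n+1) (Proc.lift c R) = Proc.lift c (Proc.subst P n R) := by
  induction P with
  | nil => intros; rfl
  | pvar m =>
    intro c n R h
    by_cases h1 : m < c
    · simp only [Proc.lift, if_pos h1, Proc.subst, if_neg (by omega : ¬ m = n + 1),
        if_neg (by omega : ¬ n + 1 < m), if_neg (by omega : ¬ m = n),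
        if_neg (by omega : ¬ n < m), Proc.lift, if_pos h1]
    · by_cases hmn : m = n
      · subst hmn
        simp [Proc.lift, if_neg h1, Proc.subst]
      · by_cases hlt : n < m
        · simp only [Proc.lift, if_neg h1, Proc.subst,
            if_neg (by omega : ¬ m + 1 = n + 1), if_pos (by omega : n + 1 < m + 1),
            if_neg hmn, if_pos hlt, Nat.add_sub_cancel, Proc.lift,
            if_neg (by omega : ¬ m - 1 < c)]
          congr 1; omega
        · simp only [Proc.lift, if_neg h1, Proc.subst,
            if_neg (by omega : ¬ m + 1 = n + 1), if_neg (by omega : ¬ n + 1 < m + 1),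
            if_neg hmn, if_neg hlt, Proc.lift, if_neg h1]
  | tick P ih => intro c n R h; simp only [Proc.lift, Proc.subst, ih _ _ _ h]
  | par P Q ihP ihQ => intro c n R h; simp only [Proc.lift, Proc.subst, ihP _ _ _ h, ihQ _ _ _ h]
  | out ch v P Q ihP ihQ =>
    intro c n R h; simp only [Proc.lift, Proc.subst, ihP _ _ _ h, ihQ _ _ _ h]
  | inp ch f Q ihf ihQ =>
    intro c n R h; simp only [Proc.lift, Proc.subst, ihQ _ _ _ h]
    congr 1; funext v; exact ihf v _ _ _ h
  | read s f Q ihf ihQ =>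
    intro c n R h; simp only [Proc.lift, Proc.subst, ihQ _ _ _ h]
    congr 1; funext v; exact ihf v _ _ _ h
  | write a v P Q ihP ihQ =>
    intro c n R h; simp only [Proc.lift, Proc.subst, ihP _ _ _ h, ihQ _ _ _ h]
  | res P ch ih => intro c n R h; simp only [Proc.lift, Proc.subst, ih _ _ _ h]
  | fix P ih =>
    intro c n R h
    simp only [Proc.lift, Proc.subst]
    rw [Proc.lift_lift R c 0 (Nat.zero_le _), ih (c+1) (n+1) (Proc.lift 0 R) (by omega)]

theorem ClosedAbove.mono {c d : ℕ} {P : Proc} (h : ClosedAbove c P) (hcd : c ≤ d) :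
    ClosedAbove d P := by
  induction h generalizing d with
  | pvar h => exact .pvar (by omega)
  | nil => exact .nil
  | tick _ ih => exact .tick (ih hcd)
  | par _ _ ihP ihQ => exact .par (ihP hcd) (ihQ hcd)
  | out _ _ ihP ihQ => exact .out (ihP hcd) (ihQ hcd)
  | inp _ _ ihf ihQ => exact .inp (fun v => ihf v hcd) (ihQ hcd)
  | read _ _ ihf ihQ => exact .read (fun v => ihf v hcd) (ihQ hcd)
  | write _ _ ihP ihQ => exact .write (ihP hcd) (ihQ hcd)
  | res _ ih => exact .res (ih hcd)
  | fix _ ih => exact .fix (ih (by omega))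

theorem Proc.lift_closed {c : ℕ} {P : Proc} (h : ClosedAbove c P) : Proc.lift c P = P := by
  induction h with
  | pvar h => simp only [Proc.lift, if_pos h]
  | nil => rfl
  | tick _ ih => simp only [Proc.lift, ih]
  | par _ _ ihP ihQ => simp only [Proc.lift, ihP, ihQ]
  | out _ _ ihP ihQ => simp only [Proc.lift, ihP, ihQ]
  | inp _ _ ihf ihQ => simp only [Proc.lift, ihQ]; congr 1; funext v; exact ihf v
  | read _ _ ihf ihQ => simp only [Proc.lift, ihQ]; congr 1; funext v; exact ihf v
  | write _ _ ihP ihQ => simp only [Proc.lift, ihP, ihQ]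
  | res _ ih => simp only [Proc.lift, ih]
  | fix _ ih => simp only [Proc.lift, ih]

theorem Proc.subst_closed {c : ℕ} {P : Proc} (h : ClosedAbove c P) :
    ∀ n R, c ≤ n → Proc.subst P n R = P := by
  induction h with
  | pvar h =>
    intro n R hcn
    rename_i m d
    simp only [Proc.subst, if_neg (by omega : ¬ m = n), if_neg (by omega : ¬ n < m)]
  | nil => intros; rfl
  | tick _ ih => intro n R hcn; simp only [Proc.subst, ih _ _ hcn]
  | par _ _ ihP ihQ => intro n R hcn; simp only [Proc.subst, ihP _ _ hcn, ihQ _ _ hcn]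
  | out _ _ ihP ihQ => intro n R hcn; simp only [Proc.subst, ihP _ _ hcn, ihQ _ _ hcn]
  | inp _ _ ihf ihQ =>
    intro n R hcn; simp only [Proc.subst, ihQ _ _ hcn]
    congr 1; funext v; exact ihf v _ _ hcn
  | read _ _ ihf ihQ =>
    intro n R hcn; simp only [Proc.subst, ihQ _ _ hcn]
    congr 1; funext v; exact ihf v _ _ hcn
  | write _ _ ihP ihQ => intro n R hcn; simp only [Proc.subst, ihP _ _ hcn, ihQ _ _ hcn]
  | res _ ih => intro n R hcn; simp only [Proc.subst, ih _ _ hcn]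
  | fix _ ih => intro n R hcn; simp only [Proc.subst, ih (n+1) (Proc.lift 0 R) (by omega)]

end Aux

noncomputable section Aux2
open Classical

theorem Proc.subst_ite (c : Prop) [Decidable c] (P Q : Proc) (n : ℕ) (R : Proc) :
    Proc.subst (if c then P else Q) n R =
      if c then Proc.subst P n R else Proc.subst Q n R := by
  split <;> rfl

theorem Proc.lift_ite (c : Prop) [Decidable c] (P Q : Proc) (n : ℕ) :
    Proc.lift n (if c then P else Q) = if c then Proc.lift n P else Proc.lift n Q := by
  split <;> rfl

/-- The engine controller. -/
def Ctrl : Proc := CtrlN 0 0 0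

def hAux (y : Val) : Proc :=
  if 10 < y then prefOut warningCh 0 (.pvar 0) else prefWrite 0 valOff (.tick Ctrl)

/-- The closed cooling process `F = fix Y. tick^5 ...`. -/
def PF : Proc := .fix (Proc.ticks 5 (prefRead 0 hAux))

def h2 (y : Val) : Proc :=
  if 10 < y then prefOut warningCh 0 PF else prefWrite 0 valOff (.tick Ctrl)

def gAux (v : Val) : Proc :=
  if 10 < v then prefWrite 0 valOn PF else .tick Ctrl

theorem Ctrl_eq_fix : Ctrl = .fix (prefRead 0 (fun x =>
    if 10 < x then
      prefWrite 0 valOn (.fix (Proc.ticks 5 (prefRead 0 (fun y =>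
        if 10 < y then prefOut warningCh 0 (.pvar 0)
        else prefWrite 0 valOff (.tick (.pvar 1))))))
    else .tick (.pvar 0))) := rfl

/-- Unfolding the outer fix of `Ctrl`. -/
theorem unfold_CtrlBody : Proc.unfold (prefRead 0 (fun x =>
    if 10 < x then
      prefWrite 0 valOn (.fix (Proc.ticks 5 (prefRead 0 (fun y =>
        if 10 < y then prefOut warningCh 0 (.pvar 0)
        else prefWrite 0 valOff (.tick (.pvar 1))))))
    else .tick (.pvar 0))) = prefRead 0 gAux := by
  simp [Proc.unfold, Ctrl, CtrlN, prefRead, prefWrite, prefOut, Proc.ticks, gAux, hAux, PF,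
    Proc.subst, Proc.lift, Proc.subst_ite, Proc.lift_ite]

/-- Unfolding the fix of `PF`. -/
theorem unfold_PFBody :
    Proc.unfold (Proc.ticks 5 (prefRead 0 hAux)) = Proc.ticks 5 (prefRead 0 h2) := by
  simp [Proc.unfold, Ctrl, CtrlN, prefRead, prefWrite, prefOut, Proc.ticks, h2, hAux, PF,
    Proc.subst, Proc.lift, Proc.subst_ite, Proc.lift_ite]

theorem unfold_prefRead (s : SensName) (f : Val → Proc) :
    Proc.unfold (.read s (fun v => Proc.lift 0 (f v)) (.pvar 0)) =
      .read s f (prefRead s f) := by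
  simp [Proc.unfold, Proc.subst, Proc.subst_lift, prefRead]

theorem unfold_prefWrite (a : ActName) (v : Val) (P : Proc) :
    Proc.unfold (.write a v (Proc.lift 0 P) (.pvar 0)) =
      .write a v P (prefWrite a v P) := by
  simp [Proc.unfold, Proc.subst, Proc.subst_lift, prefWrite]

theorem unfold_prefOut (c : Chan) (v : Val) (P : Proc) :
    Proc.unfold (.out c v (Proc.lift 0 P) (.pvar 0)) =
      .out c v P (prefOut c v P) := by
  simp [Proc.unfold, Proc.subst, Proc.subst_lift, prefOut]

end Aux2

noncomputable section Aux3
open Classical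

/-! ### Process-level transitions of the controller states -/

theorem UStep_prefRead (s : SensName) (f : Val → Proc) (v : Val) :
    UStep (prefRead s f) (.read s v) (f v) := by
  apply UStep.unfold
  rw [show Proc.unfold (.read s (fun v => Proc.lift 0 (f v)) (.pvar 0)) =
    .read s f (prefRead s f) from unfold_prefRead s f]
  exact UStep.read

theorem UStep_prefWrite (a : ActName) (v : Val) (P : Proc) :
    UStep (prefWrite a v P) (.write a v) P := by
  apply UStep.unfold
  rw [show Proc.unfold (.write a v (Proc.lift 0 P) (.pvar 0)) =
    .write a v P (prefWrite a v P) from unfold_prefWrite a v P]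
  exact UStep.write

theorem UStep_prefOut (c : Chan) (v : Val) (P : Proc) :
    UStep (prefOut c v P) (.out c v) P := by
  apply UStep.unfold
  rw [show Proc.unfold (.out c v (Proc.lift 0 P) (.pvar 0)) =
    .out c v P (prefOut c v P) from unfold_prefOut c v P]
  exact UStep.outp

theorem UStep_Ctrl (v : Val) : UStep Ctrl (.read 0 v) (gAux v) := by
  rw [Ctrl_eq_fix]
  apply UStep.unfold
  rw [unfold_CtrlBody]
  exact UStep_prefRead 0 gAux v

/-! ### Inversion lemmas -/

theorem UStep_prefRead_inv {s : SensName} {f : Val → Proc} {l : Label} {Q : Proc}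
    (h : UStep (prefRead s f) l Q) : ∃ v, l = .read s v ∧ Q = f v := by
  rw [show prefRead s f = .fix (.read s (fun v => Proc.lift 0 (f v)) (.pvar 0)) from rfl] at h
  cases h with
  | unfold h' =>
    rw [unfold_prefRead] at h'
    cases h' with
    | read => exact ⟨_, rfl, rfl⟩

theorem UStep_prefWrite_inv {a : ActName} {v : Val} {P : Proc} {l : Label} {Q : Proc}
    (h : UStep (prefWrite a v P) l Q) : l = .write a v ∧ Q = P := by
  rw [show prefWrite a v P = .fix (.write a v (Proc.lift 0 P) (.pvar 0)) from rfl] at h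
  cases h with
  | unfold h' =>
    rw [unfold_prefWrite] at h'
    cases h' with
    | write => exact ⟨rfl, rfl⟩

theorem UStep_prefOut_inv {c : Chan} {v : Val} {P : Proc} {l : Label} {Q : Proc}
    (h : UStep (prefOut c v P) l Q) : l = .out c v ∧ Q = P := by
  rw [show prefOut c v P = .fix (.out c v (Proc.lift 0 P) (.pvar 0)) from rfl] at h
  cases h with
  | unfold h' =>
    rw [unfold_prefOut] at h'
    cases h' with
    | outp => exact ⟨rfl, rfl⟩

theorem UStep_Ctrl_inv {l : Label} {Q : Proc} (h : UStep Ctrl l Q) :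
    ∃ v, l = .read 0 v ∧ Q = gAux v := by
  rw [Ctrl_eq_fix] at h
  cases h with
  | unfold h' =>
    rw [unfold_CtrlBody] at h'
    exact UStep_prefRead_inv h'

theorem UStep_tick_inv {P : Proc} {l : Label} {Q : Proc} (h : UStep (.tick P) l Q) : False := by
  cases h

theorem UStep_PF_inv {l : Label} {Q : Proc} (h : UStep PF l Q) : False := by
  rw [show PF = .fix (Proc.ticks 5 (prefRead 0 hAux)) from rfl] at h
  cases h with
  | unfold h' =>
    rw [unfold_PFBody] at h'
    cases h'

theorem UStep_ticks_inv {k : ℕ} {P : Proc} {l : Label} {Q : Proc}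
    (h : UStep (Proc.ticks (k+1) P) l Q) : False := by
  cases h

/-! ### Timed transitions -/

theorem TStep_tick_inv {P Q : Proc} (h : TStep (.tick P) Q) : Q = P := by
  cases h; rfl

theorem TStep_PF_inv {Q : Proc} (h : TStep PF Q) :
    Q = Proc.ticks 4 (prefRead 0 h2) := by
  rw [show PF = .fix (Proc.ticks 5 (prefRead 0 hAux)) from rfl] at h
  cases h with
  | unfold h' =>
    rw [unfold_PFBody] at h'
    exact TStep_tick_inv h'

theorem TStep_PF : TStep PF (Proc.ticks 4 (prefRead 0 h2)) := by
  rw [show PF = .fix (Proc.ticks 5 (prefRead 0 hAux)) from rfl]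
  apply TStep.unfold
  rw [unfold_PFBody]
  exact TStep.delay

end Aux3

noncomputable section Aux4
open Classical

/-- Engine-style environment with temperature `t` and cool value `u`. -/
def EnvAt (r t u : ℝ) : Env :=
  { EngEnvN r 0 0 0 with xi_x := fun _ => t, xi_u := fun _ => u }

theorem mem0 : (0:ℕ) ∈ ({0} : Finset ℕ) := Finset.mem_singleton_self 0

theorem EngGen_eq (r : ℝ) : EngGen r = ⟨EnvAt r 0 valOff, Ctrl⟩ := rfl

theorem invHolds_EnvAt {r t u : ℝ} : invHolds (EnvAt r t u) ↔ 0 ≤ t ∧ t ≤ 30 := by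
  constructor
  · intro h; exact h ⟨0, mem0⟩
  · intro h y; exact h

theorem readSensor_EnvAt {r t u v : ℝ} :
    v ∈ readSensor (EnvAt r t u) 0 ↔ t - engEps ≤ v ∧ v ≤ t + engEps := by
  constructor
  · rintro ⟨h, ξ, hmeas, rfl⟩
    have := hmeas ⟨0, h⟩ ⟨0, mem0⟩
    simpa [EnvAt, EngEnvN, Set.mem_Icc] using this
  · intro h
    refine ⟨mem0, fun _ => v, ?_, rfl⟩
    intro t' y
    simpa [EnvAt, EngEnvN, Set.mem_Icc] using h

theorem updateAct_EnvAt {r t u v : ℝ} : updateAct (EnvAt r t u) 0 v = EnvAt r t v := by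
  have h : (fun b : {n // n ∈ (EnvAt r t u).A} =>
      if (b : ℕ) = 0 then v else (EnvAt r t u).xi_u b) = fun _ => v := by
    funext b
    exact if_pos (Finset.mem_singleton.mp b.2)
  exact (congrArg (fun f => ({ EnvAt r t u with xi_u := f } : Env)) h).trans rfl

theorem nextEnv_EnvAt {r t u : ℝ} {E' : Env} :
    E' ∈ nextEnv (EnvAt r t u) ↔
      ∃ γ, -engDelta ≤ γ ∧ γ ≤ engDelta ∧ E' = EnvAt r (t + engHeat r u + γ) u := by
  constructor
  · rintro ⟨ξ, hξ, rfl⟩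
    obtain ⟨γ, hγ, hval⟩ := hξ
    refine ⟨γ, (Set.mem_Icc.mp hγ).1, (Set.mem_Icc.mp hγ).2, ?_⟩
    have hfun : ξ = fun _ => t + engHeat r u + γ := by
      funext y
      exact hval y ⟨0, mem0⟩
    rw [hfun]
    exact rfl
  · rintro ⟨γ, h1, h2, rfl⟩
    refine ⟨fun _ => t + engHeat r u + γ, ⟨γ, Set.mem_Icc.mpr ⟨h1, h2⟩, fun y uu => rfl⟩, rfl⟩

theorem engHeat_off {r u : ℝ} (h : 0 ≤ u) : engHeat r u = 1 := by
  simp [engHeat, not_lt.mpr h]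

theorem engHeat_on {r u : ℝ} (h : u < 0) : engHeat r u = -r := by
  simp [engHeat, h]

end Aux4

noncomputable section Aux5
open Classical

/-- Reachable configurations of the engine `Eng` (process state with temperature
and cooling bounds). -/
def PState (P : Proc) (t u : ℝ) : Prop :=
  (P = Ctrl ∧ t ≤ 11.5) ∨
  (P = .tick Ctrl ∧ t ≤ 10.1) ∨
  (P = prefWrite 0 valOn PF ∧ t ≤ 11.5) ∨
  (P = PF ∧ t ≤ 11.5 ∧ u < 0) ∨
  (∃ k, k ≤ 4 ∧ P = Proc.ticks k (prefRead 0 h2) ∧ t ≤ 11.5 - 0.6 * (5 - (k:ℝ)) ∧ u < 0) ∨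
  (P = prefWrite 0 valOff (.tick Ctrl) ∧ t ≤ 8.5)

/-- The invariant of `Eng`. -/
def EngInv (M : CPS) : Prop := ∃ t u, M.env = EnvAt 1 t u ∧ PState M.proc t u

theorem engHeat_one_le (u : ℝ) : engHeat 1 u ≤ 1 := by
  unfold engHeat; split <;> norm_num

theorem EngInv_init : EngInv Eng := ⟨0, valOff, rfl, Or.inl ⟨rfl, by norm_num⟩⟩

theorem PState_ustep {P : Proc} {t u : ℝ} {l : Label} {Q : Proc}
    (hP : PState P t u) (h : UStep P l Q) :
    (∃ v, l = .read 0 v) ∨ (∃ v, l = .write 0 v) := by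
  rcases hP with ⟨rfl,_⟩|⟨rfl,_⟩|⟨rfl,_⟩|⟨rfl,_,_⟩|⟨k,hk,rfl,_,_⟩|⟨rfl,_⟩
  · obtain ⟨v, rfl, _⟩ := UStep_Ctrl_inv h; exact Or.inl ⟨v, rfl⟩
  · exact (UStep_tick_inv h).elim
  · obtain ⟨rfl, _⟩ := UStep_prefWrite_inv h; exact Or.inr ⟨valOn, rfl⟩
  · exact (UStep_PF_inv h).elim
  · rcases k with _ | j
    · obtain ⟨v, rfl, _⟩ := UStep_prefRead_inv h; exact Or.inl ⟨v, rfl⟩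
    · exact (UStep_ticks_inv h).elim
  · obtain ⟨rfl, _⟩ := UStep_prefWrite_inv h; exact Or.inr ⟨valOff, rfl⟩

/-- The engine can never perform an output. -/
theorem EngInv_no_out {M M' : CPS} {c : Chan} {v : Val}
    (hI : EngInv M) (hs : CStep M (.out c v) M') : False := by
  obtain ⟨E, P⟩ := M
  obtain ⟨t, u, hE, hP⟩ := hI
  have hs' : CStepU ⟨E, P⟩ (.out c v) M' := hs
  cases hs' with
  | out h1 _ =>
    rcases PState_ustep hP h1 with ⟨w, hw⟩ | ⟨w, hw⟩ <;> simp at hw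

/-- Preservation of the invariant. -/
theorem EngInv_step {M M' : CPS} {α : Label} (hI : EngInv M) (hs : CStep M α M') :
    EngInv M' := by
  obtain ⟨E, P⟩ := M
  obtain ⟨E', P'⟩ := M'
  obtain ⟨t, u, hE, hP⟩ := hI
  simp only at hE
  subst hE
  cases α with
  | tick =>
    obtain ⟨hT, hno, hinv, hnext⟩ := hs
    simp only at hT hnext hinv
    rw [nextEnv_EnvAt] at hnext
    obtain ⟨γ, hγ1, hγ2, hE'⟩ := hnext
    subst hE'
    have hd2 : γ ≤ 0.4 := by simpa [engDelta] using hγ2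
    rcases hP with ⟨rfl, ht⟩ | ⟨rfl, ht⟩ | ⟨rfl, ht⟩ | ⟨rfl, ht, hu⟩ |
      ⟨k, hk, rfl, ht, hu⟩ | ⟨rfl, ht⟩
    · exact absurd (CStepU.sensRead (UStep_Ctrl t) hinv
        (readSensor_EnvAt.mpr (by norm_num [engEps]))) (hno _)
    · have hP' := TStep_tick_inv hT
      subst hP'
      refine ⟨t + engHeat 1 u + γ, u, rfl, Or.inl ⟨rfl, ?_⟩⟩
      have := engHeat_one_le u
      linarith
    · exact absurd (CStepU.actWrite (UStep_prefWrite 0 valOn PF) hinv) (hno _)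
    · have hP' := TStep_PF_inv hT
      subst hP'
      refine ⟨t + engHeat 1 u + γ, u, rfl, Or.inr (Or.inr (Or.inr (Or.inr (Or.inl
        ⟨4, by norm_num, rfl, ?_, hu⟩))))⟩
      rw [engHeat_on hu]
      norm_num
      linarith
    · rcases k with _ | j
      · exact absurd (CStepU.sensRead (UStep_prefRead 0 h2 t) hinv
          (readSensor_EnvAt.mpr (by norm_num [engEps]))) (hno _)
      · have hP' := TStep_tick_inv hT
        subst hP'
        refine ⟨t + engHeat 1 u + γ, u, rfl, Or.inr (Or.inr (Or.inr (Or.inr (Or.inl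
          ⟨j, by omega, rfl, ?_, hu⟩))))⟩
        rw [engHeat_on hu]
        push_cast at ht ⊢
        linarith
    · exact absurd (CStepU.actWrite (UStep_prefWrite 0 valOff (.tick Ctrl)) hinv) (hno _)
  | tau =>
    have hs' : CStepU ⟨EnvAt 1 t u, P⟩ .tau ⟨E', P'⟩ := hs
    cases hs' with
    | sensRead h1 hinv hmem =>
      rcases hP with ⟨rfl, ht⟩ | ⟨rfl, ht⟩ | ⟨rfl, ht⟩ | ⟨rfl, ht, hu⟩ |
        ⟨k, hk, rfl, ht, hu⟩ | ⟨rfl, ht⟩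
      · obtain ⟨w, hl, rfl⟩ := UStep_Ctrl_inv h1
        injection hl with hls hlv
        subst hls; subst hlv
        rename_i w
        obtain ⟨hm1, hm2⟩ := readSensor_EnvAt.mp hmem
        refine ⟨t, u, rfl, ?_⟩
        by_cases h10 : 10 < w
        · exact Or.inr (Or.inr (Or.inl ⟨by simp [gAux, h10], ht⟩))
        · refine Or.inr (Or.inl ⟨by simp [gAux, h10], ?_⟩)
          have : w ≤ 10 := not_lt.mp h10
          have : engEps = 0.1 := rfl
          linarith [hm1]
      · exact (UStep_tick_inv h1).elim
      · obtain ⟨hl, _⟩ := UStep_prefWrite_inv h1; simp at hl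
      · exact (UStep_PF_inv h1).elim
      · rcases k with _ | j
        · obtain ⟨w, hl, rfl⟩ := UStep_prefRead_inv h1
          injection hl with hls hlv
          subst hls; subst hlv
          rename_i w
          obtain ⟨hm1, hm2⟩ := readSensor_EnvAt.mp hmem
          refine ⟨t, u, rfl, ?_⟩
          have hw10 : ¬ 10 < w := by
            have : engEps = 0.1 := rfl
            push_cast at ht
            simp only [not_lt]
            linarith
          exact Or.inr (Or.inr (Or.inr (Or.inr (Or.inr
            ⟨by simp [h2, hw10], by push_cast at ht; linarith⟩))))
        · exact (UStep_ticks_inv h1).elim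
      · obtain ⟨hl, _⟩ := UStep_prefWrite_inv h1; simp at hl
    | actWrite h1 hinv =>
      rcases hP with ⟨rfl, ht⟩ | ⟨rfl, ht⟩ | ⟨rfl, ht⟩ | ⟨rfl, ht, hu⟩ |
        ⟨k, hk, rfl, ht, hu⟩ | ⟨rfl, ht⟩
      · obtain ⟨w, hl, _⟩ := UStep_Ctrl_inv h1; simp at hl
      · exact (UStep_tick_inv h1).elim
      · obtain ⟨hl, rfl⟩ := UStep_prefWrite_inv h1
        injection hl with hla hlv
        subst hla; subst hlv
        rw [updateAct_EnvAt]
        exact ⟨t, valOn, rfl, Or.inr (Or.inr (Or.inr (Or.inl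
          ⟨rfl, ht, by norm_num [valOn]⟩)))⟩
      · exact (UStep_PF_inv h1).elim
      · rcases k with _ | j
        · obtain ⟨w, hl, _⟩ := UStep_prefRead_inv h1; simp at hl
        · exact (UStep_ticks_inv h1).elim
      · obtain ⟨hl, rfl⟩ := UStep_prefWrite_inv h1
        injection hl with hla hlv
        subst hla; subst hlv
        rw [updateAct_EnvAt]
        refine ⟨t, valOff, rfl, Or.inr (Or.inl ⟨rfl, by linarith⟩)⟩
    | tau h1 hinv =>
      rcases PState_ustep hP h1 with ⟨w, hw⟩ | ⟨w, hw⟩ <;> simp at hw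
  | out c v => exact (EngInv_no_out ⟨t, u, rfl, hP⟩ hs).elim
  | inp c v =>
    have hs' : CStepU ⟨EnvAt 1 t u, P⟩ (.inp c v) ⟨E', P'⟩ := hs
    cases hs' with
    | inp h1 _ =>
      rcases PState_ustep hP h1 with ⟨w, hw⟩ | ⟨w, hw⟩ <;> simp at hw
  | write a v =>
    have hs' : CStepU ⟨EnvAt 1 t u, P⟩ (.write a v) ⟨E', P'⟩ := hs
    cases hs'
  | read s v =>
    have hs' : CStepU ⟨EnvAt 1 t u, P⟩ (.read s v) ⟨E', P'⟩ := hs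
    cases hs'

theorem EngInv_weakTau {M N : CPS} (hI : EngInv M) (h : WeakTau M N) : EngInv N := by
  induction h with
  | refl => exact hI
  | tail h1 h2 ih => exact EngInv_step ih h2

theorem EngInv_weakStep {M N : CPS} {α : Label} (hI : EngInv M) (h : WeakStep M α N) :
    EngInv N := by
  obtain ⟨M1, M2, h1, h2, h3⟩ := h
  exact EngInv_weakTau (EngInv_step (EngInv_weakTau hI h1) h2) h3

theorem EngInv_weakHat {M N : CPS} {α : Label} (hI : EngInv M) (h : WeakHat M α N) :
    EngInv N := by
  cases α with
  | tau => exact EngInv_weakTau hI h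
  | tick => exact EngInv_weakStep hI h
  | out c v => exact EngInv_weakStep hI h
  | inp c v => exact EngInv_weakStep hI h
  | write a v => exact EngInv_weakStep hI h
  | read s v => exact EngInv_weakStep hI h

end Aux5

noncomputable section Aux6
open Classical

/-- Engine-style CPS state. -/
def HState (t u : ℝ) (P : Proc) : CPS := ⟨EnvAt 0.7 t u, P⟩

theorem noTau_of_noUStep {E : Env} {P : Proc} (h : ∀ l Q, ¬ UStep P l Q) :
    ∀ N', ¬ CStepU ⟨E, P⟩ .tau N' := by
  intro N' hc
  cases hc with
  | sensRead h1 _ _ => exact h _ _ h1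
  | actWrite h1 _ => exact h _ _ h1
  | tau h1 _ => exact h _ _ h1

theorem engEps_eq : engEps = (0.1:ℝ) := rfl
theorem engDelta_eq : engDelta = (0.4:ℝ) := rfl

theorem HStep_read_Ctrl {t u v : ℝ} (h0 : 0 ≤ t) (h30 : t ≤ 30)
    (hv1 : t - 0.1 ≤ v) (hv2 : v ≤ t + 0.1) :
    CStep (HState t u Ctrl) .tau (HState t u (gAux v)) :=
  CStepU.sensRead (UStep_Ctrl v) (invHolds_EnvAt.mpr ⟨h0, h30⟩)
    (readSensor_EnvAt.mpr ⟨by rw [engEps_eq]; linarith, by rw [engEps_eq]; linarith⟩)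

theorem HStep_read_F0 {t u v : ℝ} (h0 : 0 ≤ t) (h30 : t ≤ 30)
    (hv1 : t - 0.1 ≤ v) (hv2 : v ≤ t + 0.1) :
    CStep (HState t u (prefRead 0 h2)) .tau (HState t u (h2 v)) :=
  CStepU.sensRead (UStep_prefRead 0 h2 v) (invHolds_EnvAt.mpr ⟨h0, h30⟩)
    (readSensor_EnvAt.mpr ⟨by rw [engEps_eq]; linarith, by rw [engEps_eq]; linarith⟩)

theorem HStep_write {t u w : ℝ} {P : Proc} (h0 : 0 ≤ t) (h30 : t ≤ 30) :
    CStep (HState t u (prefWrite 0 w P)) .tau (HState t w P) := by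
  show CStepU (HState t u (prefWrite 0 w P)) .tau ⟨EnvAt 0.7 t w, P⟩
  rw [← updateAct_EnvAt (r := 0.7) (t := t) (u := u) (v := w)]
  exact CStepU.actWrite (UStep_prefWrite 0 w P) (invHolds_EnvAt.mpr ⟨h0, h30⟩)

theorem HStep_tick {t u t' γ : ℝ} {P Q : Proc} (hT : TStep P Q)
    (hno : ∀ l Q', ¬ UStep P l Q') (h0 : 0 ≤ t) (h30 : t ≤ 30)
    (hγ1 : -(0.4:ℝ) ≤ γ) (hγ2 : γ ≤ 0.4) (ht' : t' = t + engHeat 0.7 u + γ) :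
    CStep (HState t u P) .tick (HState t' u Q) := by
  refine ⟨hT, noTau_of_noUStep hno, invHolds_EnvAt.mpr ⟨h0, h30⟩, ?_⟩
  show EnvAt 0.7 t' u ∈ nextEnv (EnvAt 0.7 t u)
  rw [nextEnv_EnvAt]
  exact ⟨γ, by rw [engDelta_eq]; linarith, by rw [engDelta_eq]; linarith, by rw [ht']⟩

theorem game_step {R : CPS → CPS → Prop} (hB : IsBisimulation R) {H N H' : CPS} {α : Label}
    (hR : R H N) (hI : EngInv N) (hs : CStep H α H') : ∃ N', R H' N' ∧ EngInv N' := by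
  obtain ⟨N', hw, hR'⟩ := hB.2 hR hs
  exact ⟨N', hR', EngInv_weakHat hI hw⟩

/-- One heating slot of the weakened engine, matched by `Eng`. -/
theorem phaseA {R : CPS → CPS → Prop} (hB : IsBisimulation R) {N : CPS} {t : ℝ} (γ : ℝ)
    (h0 : 0 ≤ t) (h10 : t ≤ 10) (hγ1 : -(0.4:ℝ) ≤ γ) (hγ2 : γ ≤ 0.4)
    (hR : R (HState t 1 Ctrl) N) (hI : EngInv N) :
    ∃ N', R (HState (t + 1 + γ) 1 Ctrl) N' ∧ EngInv N' := by
  obtain ⟨N1, hR1, hI1⟩ := game_step hB hR hI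
    (HStep_read_Ctrl (v := t) h0 (by linarith) (by linarith) (by linarith))
  rw [show gAux t = .tick Ctrl from by simp [gAux, not_lt.mpr h10]] at hR1
  obtain ⟨N2, hR2, hI2⟩ := game_step hB hR1 hI1
    (HStep_tick (t' := t + 1 + γ) TStep.delay (fun _ _ h => UStep_tick_inv h) h0
      (by linarith) hγ1 hγ2 (by rw [engHeat_off (by norm_num)]))
  exact ⟨N2, hR2, hI2⟩

end Aux6

/-- **Non-bisimilarity of the weakened engine** (Proposition 4):
`Eng ≉ Enĝ`, where `Enĝ` uses cooling power 0.7 instead of 1. -/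
theorem eng_not_bisim_engHat : ¬ Bisim Eng EngHat := by
  rintro ⟨R, hB, hR0⟩
  have hR : R (HState 0 1 Ctrl) Eng := hB.1 hR0
  have hI : EngInv Eng := EngInv_init
  -- Heating phase: ten slots, each raising the temperature by 1.01.
  obtain ⟨N, hR, hI⟩ :=
    phaseA hB 0.01 (by norm_num) (by norm_num) (by norm_num) (by norm_num) hR hI
  rw [show (0:ℝ) + 1 + 0.01 = 1.01 from by norm_num] at hR
  obtain ⟨N, hR, hI⟩ :=
    phaseA hB 0.01 (by norm_num) (by norm_num) (by norm_num) (by norm_num) hR hI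
  rw [show (1.01:ℝ) + 1 + 0.01 = 2.02 from by norm_num] at hR
  obtain ⟨N, hR, hI⟩ :=
    phaseA hB 0.01 (by norm_num) (by norm_num) (by norm_num) (by norm_num) hR hI
  rw [show (2.02:ℝ) + 1 + 0.01 = 3.03 from by norm_num] at hR
  obtain ⟨N, hR, hI⟩ :=
    phaseA hB 0.01 (by norm_num) (by norm_num) (by norm_num) (by norm_num) hR hI
  rw [show (3.03:ℝ) + 1 + 0.01 = 4.04 from by norm_num] at hR
  obtain ⟨N, hR, hI⟩ :=
    phaseA hB 0.01 (by norm_num) (by norm_num) (by norm_num) (by norm_num) hR hI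
  rw [show (4.04:ℝ) + 1 + 0.01 = 5.05 from by norm_num] at hR
  obtain ⟨N, hR, hI⟩ :=
    phaseA hB 0.01 (by norm_num) (by norm_num) (by norm_num) (by norm_num) hR hI
  rw [show (5.05:ℝ) + 1 + 0.01 = 6.06 from by norm_num] at hR
  obtain ⟨N, hR, hI⟩ :=
    phaseA hB 0.01 (by norm_num) (by norm_num) (by norm_num) (by norm_num) hR hI
  rw [show (6.06:ℝ) + 1 + 0.01 = 7.07 from by norm_num] at hR
  obtain ⟨N, hR, hI⟩ :=
    phaseA hB 0.01 (by norm_num) (by norm_num) (by norm_num) (by norm_num) hR hI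
  rw [show (7.07:ℝ) + 1 + 0.01 = 8.08 from by norm_num] at hR
  obtain ⟨N, hR, hI⟩ :=
    phaseA hB 0.01 (by norm_num) (by norm_num) (by norm_num) (by norm_num) hR hI
  rw [show (8.08:ℝ) + 1 + 0.01 = 9.09 from by norm_num] at hR
  obtain ⟨N, hR, hI⟩ :=
    phaseA hB 0.01 (by norm_num) (by norm_num) (by norm_num) (by norm_num) hR hI
  rw [show (9.09:ℝ) + 1 + 0.01 = 10.1 from by norm_num] at hR
  -- Slot eleven: the sensor reads 10, then the temperature rises to 11.5.
  obtain ⟨N, hR, hI⟩ := game_step hB hR hI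
    (HStep_read_Ctrl (v := 10) (by norm_num) (by norm_num) (by norm_num) (by norm_num))
  rw [show gAux 10 = .tick Ctrl from by norm_num [gAux]] at hR
  obtain ⟨N, hR, hI⟩ := game_step hB hR hI
    (HStep_tick (t' := 11.5) (γ := 0.4) TStep.delay (fun _ _ h => UStep_tick_inv h)
      (by norm_num) (by norm_num) (by norm_num) (by norm_num)
      (by rw [engHeat_off (by norm_num)]; norm_num))
  -- The sensor reads 11.5 > 10: cooling is switched on.
  obtain ⟨N, hR, hI⟩ := game_step hB hR hI
    (HStep_read_Ctrl (v := 11.5) (by norm_num) (by norm_num) (by norm_num) (by norm_num))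
  rw [show gAux 11.5 = prefWrite 0 valOn PF from by norm_num [gAux]] at hR
  obtain ⟨N, hR, hI⟩ := game_step hB hR hI (HStep_write (by norm_num) (by norm_num))
  -- Five cooling ticks, each lowering the temperature by only 0.3.
  obtain ⟨N, hR, hI⟩ := game_step hB hR hI
    (HStep_tick (t' := 11.2) (γ := 0.4) TStep_PF (fun _ _ h => UStep_PF_inv h)
      (by norm_num) (by norm_num) (by norm_num) (by norm_num)
      (by rw [engHeat_on (by norm_num [valOn])]; norm_num))
  obtain ⟨N, hR, hI⟩ := game_step hB hR hI
    (HStep_tick (t' := 10.9) (γ := 0.4) TStep.delay (fun _ _ h => UStep_ticks_inv (k := 3) h)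
      (by norm_num) (by norm_num) (by norm_num) (by norm_num)
      (by rw [engHeat_on (by norm_num [valOn])]; norm_num))
  obtain ⟨N, hR, hI⟩ := game_step hB hR hI
    (HStep_tick (t' := 10.6) (γ := 0.4) TStep.delay (fun _ _ h => UStep_ticks_inv (k := 2) h)
      (by norm_num) (by norm_num) (by norm_num) (by norm_num)
      (by rw [engHeat_on (by norm_num [valOn])]; norm_num))
  obtain ⟨N, hR, hI⟩ := game_step hB hR hI
    (HStep_tick (t' := 10.3) (γ := 0.4) TStep.delay (fun _ _ h => UStep_ticks_inv (k := 1) h)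
      (by norm_num) (by norm_num) (by norm_num) (by norm_num)
      (by rw [engHeat_on (by norm_num [valOn])]; norm_num))
  obtain ⟨N, hR, hI⟩ := game_step hB hR hI
    (HStep_tick (t' := 10) (γ := 0.4) TStep.delay (fun _ _ h => UStep_ticks_inv (k := 0) h)
      (by norm_num) (by norm_num) (by norm_num) (by norm_num)
      (by rw [engHeat_on (by norm_num [valOn])]; norm_num))
  -- The temperature is still 10: the sensor may read 10.05 > 10.
  obtain ⟨N, hR, hI⟩ := game_step hB hR hI
    (HStep_read_F0 (v := 10.05) (by norm_num) (by norm_num) (by norm_num) (by norm_num))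
  rw [show h2 10.05 = prefOut warningCh 0 PF from by norm_num [h2]] at hR
  -- The weakened engine emits the warning, which `Eng` cannot match.
  obtain ⟨N', hw, _⟩ := hB.2 hR
    (show CStep (HState 10 valOn (prefOut warningCh 0 PF)) (.out warningCh 0)
        (HState 10 valOn PF) from
      CStepU.out (UStep_prefOut warningCh 0 PF)
        (invHolds_EnvAt.mpr ⟨by norm_num, by norm_num⟩))
  obtain ⟨N1, N2, hw1, hw2, _⟩ := hw
  exact EngInv_no_out (EngInv_weakTau hI hw1) hw2

end CCPS
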